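/- Consider the deterministic single-player liquidation model: T > 0, x ∈ ℝ, Θ := (1,0) ∈ ℝ²; continuous coefficients η, λ : [0,T] → ℝ with η > 0 and λ ≥ 0, A : [0,T] → M₂(ℝ), B⁽¹⁾, B⁽²⁾ : [0,T] → ℝ², R : [0,T] → ℝ². For continuous ξ : [0,T] → ℝ set X^ξ(t) := x − ∫₀ᵗ ξ(s) ds and let S^ξ be the solution of (S^ξ)′ = −A S^ξ + B⁽¹⁾ ξ + B⁽²⁾ X^ξ + R with S^ξ(0) = 0, with cost J(ξ) := ∫₀ᵀ [η ξ² + ξ ⟨Θ, S^ξ⟩ + λ (X^ξ)²] dt; call ξ admissible if X^ξ(T) = 0. Suppose M : [0,T] → ℝ and 𝒫 : [0,T] → ℝ² are differentiable such that ξ* := (M − ⟨B⁽¹⁾, 𝒫⟩)/(2η) is admissible, 𝒫(T) = 0, −M′ = 2λ X* + ⟨B⁽²⁾, 𝒫⟩ + ⟨Θ, −A S* + B⁽¹⁾ ξ* + B⁽²⁾ X* + R⟩ and −𝒫′ = −Aᵀ 𝒫 + Θ ξ*, where X* := X^{ξ*} and S* := S^{ξ*}. Then for every admissible ξ: J(ξ)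 − J(ξ*) = ∫₀ᵀ [η (ξ − ξ*)² + λ (X^ξ − X*)² + (X^ξ − X*) ⟨Θ, −A (S^ξ − S*) + B⁽¹⁾ (ξ − ξ*) + B⁽²⁾ (X^ξ − X*)⟩] dt. -/

import Mathlib

/-!
With `δX = X^ξ - X*` and `δS = S^ξ - S*`, the integrand of `J(ξ) - J(ξ*)` minus the round-trip
integrand is the derivative of the potential `F = -(M δX + ⟨𝒫, δS⟩ + δX ⟨Θ, S^ξ⟩)`: the
first-order condition `M = 2ηξ* + ⟨B⁽¹⁾, 𝒫⟩` produces the cross term `2ηξ* δξ`, and the adjoint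
equation for `𝒫` cancels `⟨Aᵀ𝒫, δS⟩` against `⟨𝒫, A δS⟩`. `F` vanishes at `0` since both
strategies start from `x` with `S(0) = 0`, and at `T` since `𝒫(T) = 0` and both strategies
liquidate, so the fundamental theorem of calculus concludes without any convexity.
-/

open Matrix Set intervalIntegral MeasureTheory

@[fun_prop]
theorem ContinuousOn.dotProduct {α ι R : Type*} [TopologicalSpace α] [TopologicalSpace R]
    [Fintype ι] [Mul R] [AddCommMonoid R] [ContinuousAdd R] [ContinuousMul R]
    {s : Set α} {v w : α → ι → R} (hv : ContinuousOn v s) (hw : ContinuousOn w s) :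
    ContinuousOn (fun a => v a ⬝ᵥ w a) s :=
  continuousOn_iff_continuous_domRestrict.2 <|
    (continuousOn_iff_continuous_domRestrict.1 hv).dotProduct
      (continuousOn_iff_continuous_domRestrict.1 hw)

@[fun_prop]
theorem ContinuousOn.matrix_mulVec {α m n R : Type*} [TopologicalSpace α] [TopologicalSpace R]
    [Fintype n] [NonUnitalNonAssocSemiring R] [ContinuousAdd R] [ContinuousMul R]
    {s : Set α} {A : α → Matrix m n R} {v : α → n → R} (hA : ContinuousOn A s)
    (hv : ContinuousOn v s) : ContinuousOn (fun a => A a *ᵥ v a) s :=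
  continuousOn_iff_continuous_domRestrict.2 <|
    (continuousOn_iff_continuous_domRestrict.1 hA).matrix_mulVec
      (continuousOn_iff_continuous_domRestrict.1 hv)

theorem HasDerivWithinAt.dotProduct {𝕜 ι : Type*} [NontriviallyNormedField 𝕜] [Fintype ι]
    {v w : 𝕜 → ι → 𝕜} {v' w' : ι → 𝕜} {s : Set 𝕜} {t : 𝕜}
    (hv : HasDerivWithinAt v v' s t) (hw : HasDerivWithinAt w w' s t) :
    HasDerivWithinAt (fun u => v u ⬝ᵥ w u) (v' ⬝ᵥ w t + v t ⬝ᵥ w') s t := by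
  unfold _root_.dotProduct
  rw [← Finset.sum_add_distrib]
  exact HasDerivWithinAt.fun_sum fun i _ =>
    (hasDerivWithinAt_pi.1 hv i).mul (hasDerivWithinAt_pi.1 hw i)

theorem hasDerivWithinAt_const_sub_integral {ξ : ℝ → ℝ} {T t : ℝ} (x : ℝ)
    (hξ : ContinuousOn ξ (Icc 0 T)) (ht : t ∈ Icc 0 T) :
    HasDerivWithinAt (fun u => x - ∫ s in (0:ℝ)..u, ξ s) (-ξ t) (Icc 0 T) t := by
  have : Fact (t ∈ Icc (0:ℝ) T) := ⟨ht⟩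
  have hint : IntervalIntegrable ξ volume 0 t :=
    (hξ.mono (by rw [uIcc_of_le ht.1]; exact Icc_subset_Icc le_rfl ht.2)).intervalIntegrable
  simpa using (integral_hasDerivWithinAt_right hint
    (hξ.stronglyMeasurableAtFilter_nhdsWithin measurableSet_Icc t)
    (hξ.continuousWithinAt ht)).const_sub x

theorem integral_eq_sub_of_hasDerivWithinAt_Icc {F f : ℝ → ℝ} {a b : ℝ} (hab : a ≤ b)
    (hF : ∀ t ∈ Icc a b, HasDerivWithinAt F (f t) (Icc a b) t)
    (hf : IntervalIntegrable f volume a b) : ∫ t in a..b, f t = F b - F a :=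
  integral_eq_sub_of_hasDeriv_right_of_le hab (fun t ht => (hF t ht).continuousWithinAt)
    (fun t ht => (hF t (Ioo_subset_Icc_self ht)).mono_of_mem_nhdsWithin
      (Icc_mem_nhdsGT_of_mem ⟨ht.1.le, ht.2⟩)) hf

theorem integral_sub_integral_eq_integral_of_hasDerivWithinAt {F f g h : ℝ → ℝ} {a b : ℝ}
    (hab : a ≤ b) (hF : ∀ t ∈ Icc a b, HasDerivWithinAt F (f t - g t - h t) (Icc a b) t)
    (hFab : F a = F b) (hf : IntervalIntegrable f volume a b)
    (hg : IntervalIntegrable g volume a b) (hh : IntervalIntegrable h volume a b) :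
    (∫ t in a..b, f t) - ∫ t in a..b, g t = ∫ t in a..b, h t := by
  have hFTC := integral_eq_sub_of_hasDerivWithinAt_Icc hab hF ((hf.sub hg).sub hh)
  rw [integral_sub (hf.sub hg) hh, integral_sub hf hg, hFab, sub_self] at hFTC
  exact sub_eq_zero.1 hFTC

section RoundTrip

variable {ι : Type*} [Fintype ι] {s : Set ℝ} {t : ℝ}
  {A : Matrix ι ι ℝ} {B₁ B₂ R Θ : ι → ℝ} {η lam ξ ξs : ℝ}
  {M X Xs : ℝ → ℝ} {P S Ss : ℝ → ι → ℝ}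

theorem hasDerivWithinAt_roundTripPotential
    (hMξ : M t = 2 * η * ξs + B₁ ⬝ᵥ P t)
    (hM : HasDerivWithinAt M
      (-(2 * lam * Xs t + B₂ ⬝ᵥ P t + Θ ⬝ᵥ (-(A *ᵥ Ss t) + ξs • B₁ + Xs t • B₂ + R))) s t)
    (hP : HasDerivWithinAt P (-(-(Aᵀ *ᵥ P t) + ξs • Θ)) s t)
    (hX : HasDerivWithinAt X (-ξ) s t) (hXs : HasDerivWithinAt Xs (-ξs) s t)
    (hS : HasDerivWithinAt S (-(A *ᵥ S t) + ξ • B₁ + X t • B₂ + R) s t)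
    (hSs : HasDerivWithinAt Ss (-(A *ᵥ Ss t) + ξs • B₁ + Xs t • B₂ + R) s t) :
    HasDerivWithinAt
      (fun u => -(M u * (X u - Xs u) + P u ⬝ᵥ (S u - Ss u) + (X u - Xs u) * (Θ ⬝ᵥ S u)))
      ((η * ξ ^ 2 + ξ * (Θ ⬝ᵥ S t) + lam * X t ^ 2)
        - (η * ξs ^ 2 + ξs * (Θ ⬝ᵥ Ss t) + lam * Xs t ^ 2)
        - (η * (ξ - ξs) ^ 2 + lam * (X t - Xs t) ^ 2
          + (X t - Xs t) * (Θ ⬝ᵥ (-(A *ᵥ (S t - Ss t)) + (ξ - ξs) • B₁ + (X t - Xs t) • B₂))))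
      s t := by
  have hδX := hX.sub hXs
  have hδS : HasDerivWithinAt (fun u => S u - Ss u)
      (-(A *ᵥ (S t - Ss t)) + (ξ - ξs) • B₁ + (X t - Xs t) • B₂) s t :=
    (hS.sub hSs).congr_deriv (by rw [mulVec_sub, sub_smul, sub_smul]; abel)
  refine (((hM.mul hδX).add (hP.dotProduct hδS)).add
    (hδX.mul ((hasDerivWithinAt_const t s Θ).dotProduct hS))).neg.congr_deriv ?_
  have hadj : (Aᵀ *ᵥ P t) ⬝ᵥ (S t - Ss t) = P t ⬝ᵥ (A *ᵥ (S t - Ss t)) := by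
    rw [mulVec_transpose, dotProduct_mulVec]
  simp only [neg_dotProduct, add_dotProduct, hadj]
  simp only [dotProduct_add, dotProduct_neg, dotProduct_smul, smul_dotProduct, smul_eq_mul,
    zero_dotProduct, dotProduct_sub, mulVec_sub, Pi.sub_apply]
  rw [dotProduct_comm (P t) B₁, dotProduct_comm (P t) B₂]
  linear_combination (ξ - ξs) * hMξ

end RoundTrip

theorem liquidation_cost_decomposition_general
    (T x : ℝ) (hT : 0 < T)
    (Θ : Fin 2 → ℝ)
    (η lam : ℝ → ℝ) (A : ℝ → Matrix (Fin 2) (Fin 2) ℝ)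
    (B₁ B₂ R : ℝ → (Fin 2 → ℝ))
    (hηc : ContinuousOn η (Set.Icc 0 T)) (hlamc : ContinuousOn lam (Set.Icc 0 T))
    (hAc : ContinuousOn A (Set.Icc 0 T))
    (hB₁c : ContinuousOn B₁ (Set.Icc 0 T)) (hB₂c : ContinuousOn B₂ (Set.Icc 0 T))
    (hηpos : ∀ t ∈ Set.Icc (0 : ℝ) T, 0 < η t)
    -- the candidate strategy and its adjoint system
    (M : ℝ → ℝ) (Padj : ℝ → (Fin 2 → ℝ)) (ξstar : ℝ → ℝ)
    (hξstar : ∀ t, ξstar t = (M t - B₁ t ⬝ᵥ Padj t) / (2 * η t))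
    (Xstar : ℝ → ℝ) (Sstar : ℝ → (Fin 2 → ℝ))
    (hXstar : ∀ t, Xstar t = x - ∫ s in (0:ℝ)..t, ξstar s)
    (hSstar0 : Sstar 0 = 0)
    (hSstar : ∀ t ∈ Set.Icc (0 : ℝ) T,
      HasDerivWithinAt Sstar
        (-(A t *ᵥ Sstar t) + ξstar t • B₁ t + Xstar t • B₂ t + R t)
        (Set.Icc (0 : ℝ) T) t)
    (hadmstar : Xstar T = 0)
    (hPadjT : Padj T = 0)
    (hM : ∀ t ∈ Set.Icc (0 : ℝ) T,
      HasDerivWithinAt M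
        (-(2 * lam t * Xstar t + B₂ t ⬝ᵥ Padj t
          + Θ ⬝ᵥ (-(A t *ᵥ Sstar t) + ξstar t • B₁ t + Xstar t • B₂ t + R t)))
        (Set.Icc (0 : ℝ) T) t)
    (hPadj : ∀ t ∈ Set.Icc (0 : ℝ) T,
      HasDerivWithinAt Padj (-(-((A t)ᵀ *ᵥ Padj t) + ξstar t • Θ))
        (Set.Icc (0 : ℝ) T) t) :
    -- conclusion: cost decomposition for every admissible ξ
    ∀ (ξ Xξ : ℝ → ℝ) (Sξ : ℝ → (Fin 2 → ℝ)),
      ContinuousOn ξ (Set.Icc 0 T) →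
      (∀ t, Xξ t = x - ∫ s in (0:ℝ)..t, ξ s) →
      Sξ 0 = 0 →
      (∀ t ∈ Set.Icc (0 : ℝ) T,
        HasDerivWithinAt Sξ
          (-(A t *ᵥ Sξ t) + ξ t • B₁ t + Xξ t • B₂ t + R t)
          (Set.Icc (0 : ℝ) T) t) →
      Xξ T = 0 →
      (∫ t in (0:ℝ)..T,
          (η t * (ξ t) ^ 2 + ξ t * (Θ ⬝ᵥ Sξ t) + lam t * (Xξ t) ^ 2))
        - (∫ t in (0:ℝ)..T,
            (η t * (ξstar t) ^ 2 + ξstar t * (Θ ⬝ᵥ Sstar t)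
              + lam t * (Xstar t) ^ 2))
        = ∫ t in (0:ℝ)..T,
            (η t * (ξ t - ξstar t) ^ 2 + lam t * (Xξ t - Xstar t) ^ 2
              + (Xξ t - Xstar t)
                * (Θ ⬝ᵥ (-(A t *ᵥ (Sξ t - Sstar t))
                    + (ξ t - ξstar t) • B₁ t + (Xξ t - Xstar t) • B₂ t))) := by
  intro ξ Xξ Sξ hξ hXξ hSξ0 hSξ hadm
  have hMc : ContinuousOn M (Icc 0 T) := fun t ht => (hM t ht).continuousWithinAt
  have hPc : ContinuousOn Padj (Icc 0 T) := fun t ht => (hPadj t ht).continuousWithinAt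
  have hSξc : ContinuousOn Sξ (Icc 0 T) := fun t ht => (hSξ t ht).continuousWithinAt
  have hSsc : ContinuousOn Sstar (Icc 0 T) := fun t ht => (hSstar t ht).continuousWithinAt
  have hMξ : ∀ t ∈ Icc 0 T, M t = 2 * η t * ξstar t + B₁ t ⬝ᵥ Padj t := fun t ht => by
    rw [hξstar]; field_simp [(hηpos t ht).ne']; ring
  have hξsc : ContinuousOn ξstar (Icc 0 T) := by
    rw [funext hξstar]
    exact (hMc.sub (hB₁c.dotProduct hPc)).div (continuousOn_const.mul hηc)
      fun t ht => (mul_pos two_pos (hηpos t ht)).ne'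
  have hXξd : ∀ t ∈ Icc 0 T, HasDerivWithinAt Xξ (-ξ t) (Icc 0 T) t := by
    rw [funext hXξ]; exact fun t => hasDerivWithinAt_const_sub_integral x hξ
  have hXsd : ∀ t ∈ Icc 0 T, HasDerivWithinAt Xstar (-ξstar t) (Icc 0 T) t := by
    rw [funext hXstar]; exact fun t => hasDerivWithinAt_const_sub_integral x hξsc
  have hXξc : ContinuousOn Xξ (Icc 0 T) := fun t ht => (hXξd t ht).continuousWithinAt
  have hXsc : ContinuousOn Xstar (Icc 0 T) := fun t ht => (hXsd t ht).continuousWithinAt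
  refine integral_sub_integral_eq_integral_of_hasDerivWithinAt hT.le (fun t ht =>
    hasDerivWithinAt_roundTripPotential (hMξ t ht) (hM t ht) (hPadj t ht) (hXξd t ht) (hXsd t ht)
      (hSξ t ht) (hSstar t ht)) ?_ ?_ ?_ ?_
  · simp [hXξ 0, hXstar 0, hSξ0, hSstar0, hadm, hadmstar, hPadjT]
  all_goals exact ContinuousOn.intervalIntegrable_of_Icc hT.le (by fun_prop)

/-- Cost decomposition for the deterministic single-player liquidation model:
for every admissible strategy `ξ`, the cost difference `J(ξ) − J(ξ*)` equals
the cost of the round trip `ξ − ξ*`, where `ξ*` is the candidate strategy from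
the forward–backward system. -/
theorem liquidation_cost_decomposition
    (T x : ℝ) (hT : 0 < T)
    (Θ : Fin 2 → ℝ) (hΘ : Θ = ![1, 0])
    (η lam : ℝ → ℝ) (A : ℝ → Matrix (Fin 2) (Fin 2) ℝ)
    (B₁ B₂ R : ℝ → (Fin 2 → ℝ))
    (hηc : ContinuousOn η (Set.Icc 0 T)) (hlamc : ContinuousOn lam (Set.Icc 0 T))
    (hAc : ContinuousOn A (Set.Icc 0 T))
    (hB₁c : ContinuousOn B₁ (Set.Icc 0 T)) (hB₂c : ContinuousOn B₂ (Set.Icc 0 T))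
    (hRc : ContinuousOn R (Set.Icc 0 T))
    (hηpos : ∀ t ∈ Set.Icc (0 : ℝ) T, 0 < η t)
    (hlamnonneg : ∀ t ∈ Set.Icc (0 : ℝ) T, 0 ≤ lam t)
    -- the candidate strategy and its adjoint system
    (M : ℝ → ℝ) (Padj : ℝ → (Fin 2 → ℝ)) (ξstar : ℝ → ℝ)
    (hξstar : ∀ t, ξstar t = (M t - B₁ t ⬝ᵥ Padj t) / (2 * η t))
    (Xstar : ℝ → ℝ) (Sstar : ℝ → (Fin 2 → ℝ))
    (hXstar : ∀ t, Xstar t = x - ∫ s in (0:ℝ)..t, ξstar s)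
    (hSstar0 : Sstar 0 = 0)
    (hSstar : ∀ t ∈ Set.Icc (0 : ℝ) T,
      HasDerivWithinAt Sstar
        (-(A t *ᵥ Sstar t) + ξstar t • B₁ t + Xstar t • B₂ t + R t)
        (Set.Icc (0 : ℝ) T) t)
    (hadmstar : Xstar T = 0)
    (hPadjT : Padj T = 0)
    (hM : ∀ t ∈ Set.Icc (0 : ℝ) T,
      HasDerivWithinAt M
        (-(2 * lam t * Xstar t + B₂ t ⬝ᵥ Padj t
          + Θ ⬝ᵥ (-(A t *ᵥ Sstar t) + ξstar t • B₁ t + Xstar t • B₂ t + R t)))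
        (Set.Icc (0 : ℝ) T) t)
    (hPadj : ∀ t ∈ Set.Icc (0 : ℝ) T,
      HasDerivWithinAt Padj (-(-((A t)ᵀ *ᵥ Padj t) + ξstar t • Θ))
        (Set.Icc (0 : ℝ) T) t) :
    -- conclusion: cost decomposition for every admissible ξ
    ∀ (ξ Xξ : ℝ → ℝ) (Sξ : ℝ → (Fin 2 → ℝ)),
      ContinuousOn ξ (Set.Icc 0 T) →
      (∀ t, Xξ t = x - ∫ s in (0:ℝ)..t, ξ s) →
      Sξ 0 = 0 →
      (∀ t ∈ Set.Icc (0 : ℝ) T,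
        HasDerivWithinAt Sξ
          (-(A t *ᵥ Sξ t) + ξ t • B₁ t + Xξ t • B₂ t + R t)
          (Set.Icc (0 : ℝ) T) t) →
      Xξ T = 0 →
      (∫ t in (0:ℝ)..T,
          (η t * (ξ t) ^ 2 + ξ t * (Θ ⬝ᵥ Sξ t) + lam t * (Xξ t) ^ 2))
        - (∫ t in (0:ℝ)..T,
            (η t * (ξstar t) ^ 2 + ξstar t * (Θ ⬝ᵥ Sstar t)
              + lam t * (Xstar t) ^ 2))
        = ∫ t in (0:ℝ)..T,
            (η t * (ξ t - ξstar t) ^ 2 + lam t * (Xξ t - Xstar t) ^ 2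
              + (Xξ t - Xstar t)
                * (Θ ⬝ᵥ (-(A t *ᵥ (Sξ t - Sstar t))
                    + (ξ t - ξstar t) • B₁ t + (Xξ t - Xstar t) • B₂ t))) :=
  liquidation_cost_decomposition_general T x hT Θ η lam A B₁ B₂ R hηc hlamc hAc hB₁c hB₂c hηpos M
    Padj ξstar hξstar Xstar Sstar hXstar hSstar0 hSstar hadmstar hPadjT hM hPadj
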